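/- arXiv:1903.02605 — 2 statements merged into one kernel-verified Lean document; each statement's English description precedes it below -/
import Mathlib

section
/- Under the hypotheses ||e_{k+1}|| ≤ a||e_k|| + θ||Δx_k|| whenever ||e_k|| + b||Δx_k|| ≤ ε (with a ∈ (0,1), θ = b·a, b > 0, σ = θ/(1-a)), if ||e_0|| ≤ ε/2 and sup_k ||Δx_k|| ≤ ε/(2(σ + b)), then the restriction ||e_k|| + b||Δx_k|| ≤ ε holds for all k, and consequently ||e_k|| ≤ max{2 a^k ||e_0||, 2σ sup_j ||Δx_j||} for all k ≥ 0. -/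
/-- Theorem 4 of the paper, fixed iteration count: with
`a ∈ (0,1)`, `b > 0`, `θ = b·a`, `σ = θ/(1-a)`, suppose the recursion
`‖e_{k+1}‖ ≤ a‖e_k‖ + θ‖Δx_k‖` holds whenever the restriction
`‖e_k‖ + b‖Δx_k‖ ≤ ε` does. If `‖e_0‖ ≤ ε/2` and `sup_k ‖Δx_k‖ ≤ ε/(2(σ+b))`,
then the restriction holds for all k and
`‖e_k‖ ≤ max{2 a^k ‖e_0‖, 2σ sup_j ‖Δx_j‖}`. -/
theorem stmt3 {n m : ℕ} (e : ℕ → EuclideanSpace ℝ (Fin n))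
    (dx : ℕ → EuclideanSpace ℝ (Fin m)) (a b ε : ℝ)
    (ha0 : 0 < a) (ha1 : a < 1) (hb : 0 < b) (hε : 0 < ε)
    (hstep : ∀ k : ℕ, ‖e k‖ + b * ‖dx k‖ ≤ ε →
      ‖e (k + 1)‖ ≤ a * ‖e k‖ + (b * a) * ‖dx k‖)
    (he0 : ‖e 0‖ ≤ ε / 2)
    (hdx : ∀ k : ℕ, ‖dx k‖ ≤ ε / (2 * (b * a / (1 - a) + b))) :
    (∀ k : ℕ, ‖e k‖ + b * ‖dx k‖ ≤ ε) ∧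
    (∀ k : ℕ, ‖e k‖ ≤
      max (2 * a ^ k * ‖e 0‖) (2 * (b * a / (1 - a)) * ⨆ j, ‖dx j‖)) := by
  set σ : ℝ := b * a / (1 - a) with hσdef
  set D : ℝ := ε / (2 * (σ + b)) with hDdef
  set S : ℝ := ⨆ j, ‖dx j‖ with hSdef
  have h1a : 0 < 1 - a := by linarith
  have hσ0 : 0 ≤ σ := div_nonneg (by positivity) h1a.le
  have hσb : 0 < σ + b := by linarith
  have hbdd : BddAbove (Set.range fun j => ‖dx j‖) := ⟨D, by
    rintro x ⟨j, rfl⟩; exact hdx j⟩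
  have hSD : S ≤ D := ciSup_le hdx
  have hS0 : 0 ≤ S := le_trans (norm_nonneg (dx 0)) (le_ciSup hbdd 0)
  have hdxS : ∀ k, ‖dx k‖ ≤ S := fun k => le_ciSup hbdd k
  have hDhalf : (σ + b) * D = ε / 2 := by
    rw [hDdef]; field_simp
  have hσeq : σ * (1 - a) = b * a := div_mul_cancel₀ _ h1a.ne'
  have resOf : ∀ k, ‖e k‖ ≤ a ^ k * ‖e 0‖ + σ * S → ‖e k‖ + b * ‖dx k‖ ≤ ε := by
    intro k hk
    have hak : a ^ k ≤ 1 := pow_le_one₀ ha0.le ha1.le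
    have h1 : a ^ k * ‖e 0‖ ≤ ε / 2 :=
      le_trans (mul_le_of_le_one_left (norm_nonneg _) hak) he0
    have h2 : σ * S ≤ σ * D := mul_le_mul_of_nonneg_left hSD hσ0
    have h3 : b * ‖dx k‖ ≤ b * D := mul_le_mul_of_nonneg_left (hdx k) hb.le
    nlinarith [hDhalf]
  have key : ∀ k, ‖e k‖ ≤ a ^ k * ‖e 0‖ + σ * S := by
    intro k
    induction k with
    | zero => simp; nlinarith [mul_nonneg hσ0 hS0]
    | succ k ih =>
      have hres := resOf k ih
      have h := hstep k hres
      have h2 : a * ‖e k‖ ≤ a * (a ^ k * ‖e 0‖ + σ * S) :=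
        mul_le_mul_of_nonneg_left ih ha0.le
      have h3 : (b * a) * ‖dx k‖ ≤ (b * a) * S :=
        mul_le_mul_of_nonneg_left (hdxS k) (by positivity)
      have : ‖e (k + 1)‖ ≤ a * (a ^ k * ‖e 0‖ + σ * S) + (b * a) * S := by
        linarith
      calc ‖e (k + 1)‖ ≤ a * (a ^ k * ‖e 0‖ + σ * S) + (b * a) * S := this
        _ = a ^ (k + 1) * ‖e 0‖ + (a * σ + b * a) * S := by ring
        _ = a ^ (k + 1) * ‖e 0‖ + σ * S := by nlinarith [hσeq]
  refine ⟨fun k => resOf k (key k), fun k => ?_⟩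
  have hk := key k
  rcases le_total (a ^ k * ‖e 0‖) (σ * S) with h | h
  · exact le_trans hk (le_trans (by linarith) (le_max_right _ _))
  · exact le_trans hk (le_trans (by linarith) (le_max_left _ _))
end

section
/- Suppose T : ℝ^n → ℝ^n satisfies T(z) = J⁻¹(G(z)) where J⁻¹ is Lipschitz with constant M, G(z) = Hz − F(z) for a matrix H and a function F whose derivative ∇F is Lipschitz with constant 2L near z*, and ||H − ∇F(z*)|| ≤ δ̄. If z* is a fixed point of T, then for all z with ||z − z*|| ≤ ε₁ (where ε₁ is the radius on which the Taylor remainder bound holds), ||T(z) − z*|| ≤ M(δ̄ + L||z − z*||)·||z − z*||. -/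
/-- key contraction estimate of Theorem 12: with `T = J⁻¹ ∘ G`,
`J⁻¹` Lipschitz with constant `M`, `G(z) = Hz − F(z)`, the Taylor remainder bound
holding with constant `L` on the ball of radius `ε₁` around `z*`,
`‖H − ∇F(z*)‖ ≤ δ̄`, and `T(z*) = z*`, one has
`‖T(z) − z*‖ ≤ M(δ̄ + L‖z − z*‖)‖z − z*‖` for `‖z − z*‖ ≤ ε₁`. -/
theorem stmt8 {n : ℕ}
    (T Jinv G F : EuclideanSpace ℝ (Fin n) → EuclideanSpace ℝ (Fin n))
    (H : EuclideanSpace ℝ (Fin n) →L[ℝ] EuclideanSpace ℝ (Fin n))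
    (zs : EuclideanSpace ℝ (Fin n)) (M δ L ε₁ : ℝ)
    (hM : 0 ≤ M) (hδ : 0 ≤ δ) (hL : 0 ≤ L) (hε₁ : 0 < ε₁)
    (hF : Differentiable ℝ F)
    (hT : ∀ z, T z = Jinv (G z))
    (hG : ∀ z, G z = H z - F z)
    (hJ : ∀ u v, ‖Jinv u - Jinv v‖ ≤ M * ‖u - v‖)
    (htaylor : ∀ z, ‖z - zs‖ ≤ ε₁ →
      ‖(fderiv ℝ F zs) (z - zs) - F z + F zs‖ ≤ L * ‖z - zs‖ ^ 2)
    (hHδ : ‖(H : EuclideanSpace ℝ (Fin n) →L[ℝ] EuclideanSpace ℝ (Fin n))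
      - fderiv ℝ F zs‖ ≤ δ)
    (hfix : T zs = zs) :
    ∀ z, ‖z - zs‖ ≤ ε₁ →
      ‖T z - zs‖ ≤ M * (δ + L * ‖z - zs‖) * ‖z - zs‖ := by
  intro z hz
  have key : ‖G z - G zs‖ ≤ (δ + L * ‖z - zs‖) * ‖z - zs‖ := by
    have e1 : G z - G zs = ((H - fderiv ℝ F zs) (z - zs)) +
        ((fderiv ℝ F zs) (z - zs) - F z + F zs) := by
      simp [hG, map_sub]
      abel
    rw [e1]
    calc ‖(H - fderiv ℝ F zs) (z - zs) + ((fderiv ℝ F zs) (z - zs) - F z + F zs)‖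
        ≤ ‖(H - fderiv ℝ F zs) (z - zs)‖ + ‖(fderiv ℝ F zs) (z - zs) - F z + F zs‖ :=
          norm_add_le _ _
      _ ≤ δ * ‖z - zs‖ + L * ‖z - zs‖ ^ 2 := by
          gcongr
          · exact le_trans ((H - fderiv ℝ F zs).le_opNorm _)
              (mul_le_mul_of_nonneg_right hHδ (norm_nonneg _))
          · exact htaylor z hz
      _ = (δ + L * ‖z - zs‖) * ‖z - zs‖ := by ring
  calc ‖T z - zs‖ = ‖Jinv (G z) - Jinv (G zs)‖ := by
        have hfix' : Jinv (G zs) = zs := by rw [← hT]; exact hfix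
        rw [hT z, hfix']
    _ ≤ M * ‖G z - G zs‖ := hJ _ _
    _ ≤ M * ((δ + L * ‖z - zs‖) * ‖z - zs‖) := by gcongr
    _ = M * (δ + L * ‖z - zs‖) * ‖z - zs‖ := by ring
end
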